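/- arXiv:0806.3686 — 5 statements merged into one kernel-verified Lean document; each statement's English description precedes it below -/
import Mathlib

section
/- For all real numbers u, v with 0 < u ≤ 1 and 0 < v ≤ 1, one has max(0, 1 + log(u·v)) = max(0, max(0, 1 + log u) + max(0, 1 + log v) − 1). In other words, the map Λ^∨(x) = max(0, 1 + log x) is a morphism from the pointwise product of cumulative distribution functions (the classical upper extremal convolution) to the operation (s, t) ↦ max(0, s + t − 1) (the free upper extremal convolution). -/
/-- A nonpositive argument already forces both sides to `0`. -/
lemma max_zero_max_zero_add_max_zero_sub_one {x y : ℝ} (hx : x ≤ 1) (hy : y ≤ 1) :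
    max 0 (max 0 x + max 0 y - 1) = max 0 (x + y - 1) := by
  rcases le_total x 0 with hx0 | hx0 <;> rcases le_total y 0 with hy0 | hy0 <;>
    simp only [max_eq_left, max_eq_right, hx0, hy0] <;> grind

/-- **Λ^∨ is a morphism from classical to free upper extremal convolution.**
For all `u, v ∈ (0, 1]`,
`max 0 (1 + log (u*v)) = max 0 (max 0 (1 + log u) + max 0 (1 + log v) - 1)`. -/
theorem lambda_vee_morphism (u v : ℝ) (hu : 0 < u) (hu1 : u ≤ 1) (hv : 0 < v) (hv1 : v ≤ 1) :
    max 0 (1 + Real.log (u * v)) =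
      max 0 (max 0 (1 + Real.log u) + max 0 (1 + Real.log v) - 1) := by
  have hlog_u : 1 + Real.log u ≤ 1 := by linarith [Real.log_nonpos hu.le hu1]
  have hlog_v : 1 + Real.log v ≤ 1 := by linarith [Real.log_nonpos hv.le hv1]
  rw [max_zero_max_zero_add_max_zero_sub_one hlog_u hlog_v, Real.log_mul hu.ne' hv.ne']
  ring_nf
end

section
/- Let μ and ν be probability measures on ℝ with cumulative distribution functions F_μ and F_ν, and for u ∈ (0,1) set F^{<−1>}(u) = inf{x ∈ ℝ : F(x) ≥ u} (the infimum is attained). Then the following three quantities (each possibly infinite, valued in [0, +∞]) are equal: (1) inf{ε > 0 : for all x ∈ ℝ, F_ν(x − ε) ≤ F_μ(x) ≤ F_ν(x + ε)}; (2) sup_{u ∈ (0,1)} |F_μ^{<−1>}(u) − F_ν^{<−1>}(u)|; (3) the infimum, over all probability measures π on ℝ × ℝ whose first marginal is μ and whose second marginal is ν, of the π-essential supremum of |x − y|. -/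
/-!
Both `qf μ` and `cdf' μ` are monotone and form a Galois connection on `(0,1)`:
`qf μ u ≤ x ↔ u ≤ cdf' μ x`. Through it, the one-sided shift condition
`F_ν(· - c) ≤ F_μ` is equivalent to `qf μ ≤ qf ν + c` on `(0,1)`, which identifies (1) with (2).
Pushing the uniform measure on `(0,1)` forward by `u ↦ (qf μ u, qf ν u)` gives a coupling
(inverse transform sampling) whose essential sup of `|x - y|` is at most (2). Conversely, for any
coupling with `|x - y| ≤ c` almost surely, `{x ≤ t} ⊆ {y ≤ t + c}` up to a null set, so the CDFs
satisfy the shift condition with `c`, and (2) is at most `c`.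
-/

open MeasureTheory
open scoped ENNReal

/-- The cumulative distribution function of a measure on `ℝ`. -/
noncomputable def cdf' (μ : Measure ℝ) : ℝ → ℝ := fun x => (μ (Set.Iic x)).toReal

/-- The (attained) generalized inverse `F_μ^{<-1>}(u) = inf {x | F_μ(x) ≥ u}`. -/
noncomputable def qf (μ : Measure ℝ) (u : ℝ) : ℝ := sInf {x : ℝ | u ≤ cdf' μ x}

open ProbabilityTheory Set Filter Topology

lemma sInf_ofReal_pos_upperBound_eq_iSup {ι : Type*} (s : Set ι) (g : ι → ℝ) :
    sInf (ENNReal.ofReal '' {ε | 0 < ε ∧ ∀ i ∈ s, g i ≤ ε}) = ⨆ i ∈ s, ENNReal.ofReal (g i) := by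
  refine le_antisymm ?_ (le_sInf ?_)
  · refine ENNReal.le_of_forall_pos_le_add fun δ hδ hlt => ?_
    obtain ⟨c, hc0, hc⟩ : ∃ c : ℝ, 0 ≤ c ∧ ⨆ i ∈ s, ENNReal.ofReal (g i) = ENNReal.ofReal c :=
      ⟨_, ENNReal.toReal_nonneg, (ENNReal.ofReal_toReal hlt.ne).symm⟩
    have hg : ∀ i ∈ s, g i ≤ c := fun i hi =>
      (ENNReal.ofReal_le_ofReal_iff hc0).1 (hc ▸ le_iSup₂_of_le i hi le_rfl)
    have hcδ : c < c + δ := lt_add_of_pos_right c hδ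
    calc sInf _ ≤ ENNReal.ofReal (c + δ) := sInf_le <| mem_image_of_mem _
          (show c + δ ∈ {ε | 0 < ε ∧ ∀ i ∈ s, g i ≤ ε} from
            ⟨hc0.trans_lt hcδ, fun i hi => (hg i hi).trans hcδ.le⟩)
      _ = _ := by rw [ENNReal.ofReal_add hc0 δ.coe_nonneg, ENNReal.ofReal_coe_nnreal, hc]
  · rintro _ ⟨ε, ⟨-, hε⟩, rfl⟩
    exact iSup₂_le fun i hi => ENNReal.ofReal_le_ofReal (hε i hi)

section Quantile

variable {μ : Measure ℝ} [IsProbabilityMeasure μ] {u x : ℝ}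

lemma cdf'_eq_cdf (μ : Measure ℝ) [IsProbabilityMeasure μ] : cdf' μ = cdf μ := by
  funext x
  rw [cdf_eq_real]
  rfl

lemma monotone_cdf' : Monotone (cdf' μ) := by
  rw [cdf'_eq_cdf]
  exact (cdf μ).mono

lemma cdf'_nonneg (x : ℝ) : 0 ≤ cdf' μ x := by
  rw [cdf'_eq_cdf]
  exact cdf_nonneg μ x

lemma cdf'_le_one (x : ℝ) : cdf' μ x ≤ 1 := by
  rw [cdf'_eq_cdf]
  exact cdf_le_one μ x

lemma nonempty_setOf_le_cdf' (hu : u < 1) : {x | u ≤ cdf' μ x}.Nonempty := by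
  rw [cdf'_eq_cdf]
  exact ((tendsto_cdf_atTop μ).eventually (eventually_ge_nhds hu)).exists

lemma bddBelow_setOf_le_cdf' (hu : 0 < u) : BddBelow {x | u ≤ cdf' μ x} := by
  obtain ⟨x₀, hx₀⟩ : ∃ x₀, cdf' μ x₀ < u := by
    rw [cdf'_eq_cdf]
    exact ((tendsto_cdf_atBot μ).eventually (eventually_lt_nhds hu)).exists
  refine ⟨x₀, fun x hx => le_of_not_gt fun hlt => ?_⟩
  exact (hx.trans (monotone_cdf' hlt.le)).not_gt hx₀

/-- The infimum defining `qf μ u` is attained, by right-continuity of `cdf' μ`. -/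
lemma le_cdf'_qf (hu : u ∈ Ioo 0 1) : u ≤ cdf' μ (qf μ u) := by
  have h_right : ∀ x, qf μ u < x → u ≤ cdf' μ x := fun x hx => by
    obtain ⟨s, hs, hsx⟩ := exists_lt_of_csInf_lt (nonempty_setOf_le_cdf' hu.2) hx
    exact hs.trans (monotone_cdf' hsx.le)
  have h_cont : Tendsto (cdf' μ) (𝓝[>] qf μ u) (𝓝 (cdf' μ (qf μ u))) := by
    rw [cdf'_eq_cdf]
    exact ((cdf μ).right_continuous _).mono Ioi_subset_Ici_self
  exact ge_of_tendsto h_cont (eventually_nhdsWithin_of_forall h_right)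

lemma qf_le_iff_le_cdf' (hu : u ∈ Ioo 0 1) : qf μ u ≤ x ↔ u ≤ cdf' μ x :=
  ⟨fun h => (le_cdf'_qf hu).trans (monotone_cdf' h),
    fun h => csInf_le (bddBelow_setOf_le_cdf' hu.1) h⟩

lemma lt_qf_iff_cdf'_lt (hu : u ∈ Ioo 0 1) : x < qf μ u ↔ cdf' μ x < u := by
  simpa only [not_le] using (qf_le_iff_le_cdf' hu).not

lemma monotoneOn_qf : MonotoneOn (qf μ) (Ioo 0 1) := fun _ hu _ hv huv =>
  (qf_le_iff_le_cdf' hu).2 (huv.trans (le_cdf'_qf hv))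

instance : IsProbabilityMeasure (volume.restrict (Ioo (0 : ℝ) 1)) :=
  ⟨by simp⟩

lemma aemeasurable_qf : AEMeasurable (qf μ) (volume.restrict (Ioo 0 1)) :=
  aemeasurable_restrict_of_monotoneOn measurableSet_Ioo monotoneOn_qf

lemma map_qf : (volume.restrict (Ioo 0 1)).map (qf μ) = μ := by
  have : IsProbabilityMeasure ((volume.restrict (Ioo (0 : ℝ) 1)).map (qf μ)) :=
    Measure.isProbabilityMeasure_map aemeasurable_qf
  refine Measure.ext_of_Iic _ _ fun x => ?_
  have h_preimage : qf μ ⁻¹' Iic x ∩ Ioo 0 1 = Iic (cdf' μ x) ∩ Ioo 0 1 := by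
    ext u
    simp only [mem_inter_iff, mem_preimage, mem_Iic, and_congr_left_iff]
    exact fun hu => qf_le_iff_le_cdf' hu
  rw [Measure.map_apply_of_aemeasurable aemeasurable_qf measurableSet_Iic,
    Measure.restrict_apply₀' measurableSet_Ioo.nullMeasurableSet, h_preimage,
    measure_congr ((ae_eq_refl _).inter Ioo_ae_eq_Ioc), Iic_inter_Ioc_of_le (cdf'_le_one x),
    Real.volume_Ioc, sub_zero, cdf', ENNReal.ofReal_toReal (measure_ne_top μ _)]

end Quantile

lemma cdf'_map_le_cdf'_map_add {Ω : Type*} [MeasurableSpace Ω] {P : Measure Ω}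
    [IsFiniteMeasure P] {X Y : Ω → ℝ} (hX : Measurable X) (hY : Measurable Y) {c : ℝ}
    (h : ∀ᵐ ω ∂P, Y ω ≤ X ω + c) (x : ℝ) :
    cdf' (P.map X) x ≤ cdf' (P.map Y) (x + c) := by
  simp only [cdf', Measure.map_apply hX measurableSet_Iic, Measure.map_apply hY measurableSet_Iic]
  refine ENNReal.toReal_mono (measure_ne_top P _) (measure_mono_ae ?_)
  filter_upwards [h] with ω hω (hωx : X ω ≤ x)
  exact (hω.trans (add_le_add_left hωx c) : Y ω ≤ x + c)

section Shift

variable {μ ν : Measure ℝ} [IsProbabilityMeasure μ] [IsProbabilityMeasure ν]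

def CdfSandwiched (μ ν : Measure ℝ) (c : ℝ) : Prop :=
  ∀ x : ℝ, cdf' ν (x - c) ≤ cdf' μ x ∧ cdf' μ x ≤ cdf' ν (x + c)

lemma forall_cdf'_sub_le_iff (c : ℝ) :
    (∀ x, cdf' ν (x - c) ≤ cdf' μ x) ↔ ∀ u ∈ Ioo (0 : ℝ) 1, qf μ u ≤ qf ν u + c := by
  constructor
  · intro h u hu
    refine (qf_le_iff_le_cdf' hu).2 ((le_cdf'_qf (μ := ν) hu).trans ?_)
    simpa only [add_sub_cancel_right] using h (qf ν u + c)
  · intro h x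
    by_contra! hlt
    obtain ⟨u, hμu, huν⟩ := exists_between hlt
    have hu : u ∈ Ioo (0 : ℝ) 1 :=
      ⟨(cdf'_nonneg x).trans_lt hμu, huν.trans_le (cdf'_le_one _)⟩
    have hx : x < qf μ u := (lt_qf_iff_cdf'_lt hu).2 hμu
    have hxν : qf ν u ≤ x - c := (qf_le_iff_le_cdf' hu).2 huν.le
    linarith [h u hu]

lemma cdfSandwiched_iff_abs_qf_sub_le (c : ℝ) :
    CdfSandwiched μ ν c ↔ ∀ u ∈ Ioo (0 : ℝ) 1, |qf μ u - qf ν u| ≤ c := by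
  have h_upper : (∀ x, cdf' μ x ≤ cdf' ν (x + c)) ↔ ∀ x, cdf' μ (x - c) ≤ cdf' ν x :=
    ⟨fun h x => by simpa only [sub_add_cancel] using h (x - c),
      fun h x => by simpa only [add_sub_cancel_right] using h (x + c)⟩
  rw [CdfSandwiched, forall_and, h_upper, forall_cdf'_sub_le_iff, forall_cdf'_sub_le_iff]
  simp only [abs_sub_le_iff, sub_le_iff_le_add', ← forall₂_and]

noncomputable def quantileDist (μ ν : Measure ℝ) : ℝ≥0∞ :=
  ⨆ u ∈ Ioo (0 : ℝ) 1, ENNReal.ofReal |qf μ u - qf ν u|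

lemma sInf_cdfSandwiched_eq_quantileDist :
    sInf (ENNReal.ofReal '' {ε | 0 < ε ∧ CdfSandwiched μ ν ε}) = quantileDist μ ν := by
  simp only [cdfSandwiched_iff_abs_qf_sub_le]
  exact sInf_ofReal_pos_upperBound_eq_iSup _ _

end Shift

section Coupling

variable {μ ν : Measure ℝ} [IsProbabilityMeasure μ] [IsProbabilityMeasure ν]

noncomputable def quantileCoupling (μ ν : Measure ℝ) : Measure (ℝ × ℝ) :=
  (volume.restrict (Ioo 0 1)).map fun u => (qf μ u, qf ν u)

lemma aemeasurable_qf_prod_qf :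
    AEMeasurable (fun u => (qf μ u, qf ν u)) (volume.restrict (Ioo 0 1)) :=
  aemeasurable_qf.prodMk aemeasurable_qf

lemma map_fst_quantileCoupling : (quantileCoupling μ ν).map Prod.fst = μ := by
  rw [quantileCoupling, AEMeasurable.map_map_of_aemeasurable measurable_fst.aemeasurable
    aemeasurable_qf_prod_qf]
  exact map_qf

lemma map_snd_quantileCoupling : (quantileCoupling μ ν).map Prod.snd = ν := by
  rw [quantileCoupling, AEMeasurable.map_map_of_aemeasurable measurable_snd.aemeasurable
    aemeasurable_qf_prod_qf]
  exact map_qf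

lemma essSup_quantileCoupling_le :
    essSup (fun p : ℝ × ℝ => ENNReal.ofReal |p.1 - p.2|) (quantileCoupling μ ν) ≤
      quantileDist μ ν := by
  have h_meas : Measurable fun p : ℝ × ℝ => ENNReal.ofReal |p.1 - p.2| :=
    ((measurable_fst.sub measurable_snd).abs).ennreal_ofReal
  rw [quantileCoupling, essSup_map_measure h_meas.aemeasurable aemeasurable_qf_prod_qf]
  refine essSup_le_of_ae_le _ ?_
  filter_upwards [ae_restrict_mem measurableSet_Ioo] with u hu
  exact le_iSup₂_of_le u hu le_rfl

lemma cdfSandwiched_of_ae_abs_sub_le {π : Measure (ℝ × ℝ)}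
    (hfst : π.map Prod.fst = μ) (hsnd : π.map Prod.snd = ν) {c : ℝ}
    (h : ∀ᵐ p ∂π, |p.1 - p.2| ≤ c) : CdfSandwiched μ ν c := by
  subst hfst hsnd
  have := Measure.isProbabilityMeasure_of_map (μ := π) Prod.fst
  intro x
  constructor
  · have := cdf'_map_le_cdf'_map_add measurable_snd measurable_fst
      (h.mono fun p hp => by linarith [abs_sub_le_iff.1 hp]) (x - c)
    rwa [sub_add_cancel] at this
  · exact cdf'_map_le_cdf'_map_add measurable_fst measurable_snd
      (h.mono fun p hp => by linarith [abs_sub_le_iff.1 hp]) x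

lemma quantileDist_le_essSup {π : Measure (ℝ × ℝ)}
    (hfst : π.map Prod.fst = μ) (hsnd : π.map Prod.snd = ν) :
    quantileDist μ ν ≤ essSup (fun p : ℝ × ℝ => ENNReal.ofReal |p.1 - p.2|) π := by
  set E := essSup (fun p : ℝ × ℝ => ENNReal.ofReal |p.1 - p.2|) π
  rcases eq_top_or_lt_top E with htop | hlt
  · exact htop ▸ le_top
  have hE : E = ENNReal.ofReal E.toReal := (ENNReal.ofReal_toReal hlt.ne).symm
  have h_ae : ∀ᵐ p ∂π, |p.1 - p.2| ≤ E.toReal := by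
    filter_upwards [ENNReal.ae_le_essSup (μ := π) fun p : ℝ × ℝ => ENNReal.ofReal |p.1 - p.2|]
      with p hp
    rwa [← ENNReal.ofReal_le_ofReal_iff ENNReal.toReal_nonneg, ← hE]
  have h_qf :=
    (cdfSandwiched_iff_abs_qf_sub_le _).1 (cdfSandwiched_of_ae_abs_sub_le hfst hsnd h_ae)
  rw [hE]
  exact iSup₂_le fun u hu => ENNReal.ofReal_le_ofReal (h_qf u hu)

end Coupling

/-- **Lemma (i): three expressions for the Lévy–Prokhorov-type `∞`-distance.**
For probability measures `μ, ν` on `ℝ`, the following quantities in `[0, ∞]` coincide: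
(1) the infimum of the `ε > 0` such that `F_ν(· - ε) ≤ F_μ(·) ≤ F_ν(· + ε)`;
(2) `sup_{u ∈ (0,1)} |F_μ^{<-1>}(u) - F_ν^{<-1>}(u)|`;
(3) the infimum over couplings `π` of `μ` and `ν` of the `π`-essential sup of `|x - y|`. -/
theorem inf_eps_eq_sup_qf_eq_inf_coupling (μ ν : Measure ℝ)
    [IsProbabilityMeasure μ] [IsProbabilityMeasure ν] :
    sInf (ENNReal.ofReal ''
        {ε : ℝ | 0 < ε ∧ ∀ x : ℝ, cdf' ν (x - ε) ≤ cdf' μ x ∧ cdf' μ x ≤ cdf' ν (x + ε)}) =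
      (⨆ u ∈ Set.Ioo (0 : ℝ) 1, ENNReal.ofReal |qf μ u - qf ν u|) ∧
    (⨆ u ∈ Set.Ioo (0 : ℝ) 1, ENNReal.ofReal |qf μ u - qf ν u|) =
      ⨅ (π : Measure (ℝ × ℝ)) (_ : π.map Prod.fst = μ ∧ π.map Prod.snd = ν),
        essSup (fun p : ℝ × ℝ => ENNReal.ofReal |p.1 - p.2|) π := by
  refine ⟨sInf_cdfSandwiched_eq_quantileDist, le_antisymm ?_ ?_⟩
  · exact le_iInf₂ fun π hπ => quantileDist_le_essSup hπ.1 hπ.2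
  · exact iInf₂_le_of_le (quantileCoupling μ ν)
      ⟨map_fst_quantileCoupling, map_snd_quantileCoupling⟩ essSup_quantileCoupling_le
end

section
/- Let μ be an atomless probability measure on ℝ with cumulative distribution function F, and let N ≤ n be positive integers. Let max_N : ℝ^n → ℝ^N denote the map sending a vector to the vector of its N largest coordinates (counted with multiplicity) arranged in decreasing order. Then the pushforward of the product measure μ^{⊗n} under max_N is absolutely continuous with respect to μ^{⊗N}, with density (t_1, …, t_N) ↦ (n!/(n−N)!) · 1_{t_1 ≥ ⋯ ≥ t_N} · F(t_N)^{n−N}. -/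
/-!
Since `μ` has no atoms, almost every `x ∈ ℝⁿ` has pairwise distinct coordinates, so up to a null
set `ℝⁿ` is the disjoint union of the `n!` chambers `{x | x ∘ σ strictly decreasing}`, which
permutations of the coordinates carry onto one another preserving `μ^⊗n`. As `maxN` is symmetric,
`∫ g ∘ maxN dμ^⊗n = n! ∫_{x strictly decreasing} g(x_1, …, x_N) dμ^⊗n`.
Splitting `x = (t, s)` with `t ∈ ℝ^N`, `x` is strictly decreasing iff `t` and `s` are and every
`s_j` lies below `t_N`; by the same symmetrization applied to the cube `(-∞, t_N)^{n-N}`, the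
`s`-section has measure `F(t_N)^{n-N}/(n-N)!`.
-/

open MeasureTheory
open scoped ENNReal

/-- `maxN N n h x` is the vector of the `N` largest coordinates of `x ∈ ℝⁿ`
(counted with multiplicity), ranked in decreasing order.  (`Tuple.sort x` sorts the
coordinates of `x` in increasing order, so we read them off from the top.) -/
noncomputable def maxN (N n : ℕ) (h : N ≤ n) (x : Fin n → ℝ) : Fin N → ℝ :=
  fun i => x (Tuple.sort x ⟨n - 1 - (i : ℕ), by omega⟩)

open Finset
open scoped Nat

section maxN

variable {N n : ℕ}

lemma measurable_apply_sort (j : Fin n) :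
    Measurable fun x : Fin n → ℝ => x (Tuple.sort x j) := by
  refine measurable_of_Iic fun a => ?_
  have hcard : Measurable fun x : Fin n → ℝ => #{i | x i ≤ a} := by
    simp_rw [Finset.card_filter]
    exact Finset.measurable_sum _ fun i _ =>
      Measurable.ite (measurableSet_le (measurable_pi_apply i) measurable_const)
        measurable_const measurable_const
  have hpre : (fun x : Fin n → ℝ => x (Tuple.sort x j)) ⁻¹' Set.Iic a =
      {x | (j : ℕ) < #{i | x i ≤ a}} := by
    ext x
    have hperm : #{i | (x ∘ Tuple.sort x) i ≤ a} = #{i | x i ≤ a} := by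
      simp only [Finset.card_filter]
      exact Equiv.sum_comp (Tuple.sort x) fun i => if x i ≤ a then 1 else 0
    rw [Set.mem_preimage, Set.mem_Iic, Set.mem_ofPred_eq, ← hperm]
    exact (Tuple.lt_card_le_iff_apply_le_of_monotone (Tuple.monotone_sort x)).symm
  rw [hpre]
  exact measurableSet_lt measurable_const hcard

lemma measurable_maxN (h : N ≤ n) : Measurable (maxN N n h) :=
  measurable_pi_lambda _ fun _ => measurable_apply_sort _

lemma maxN_comp_perm (h : N ≤ n) (x : Fin n → ℝ) (σ : Equiv.Perm (Fin n)) :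
    maxN N n h (x ∘ σ) = maxN N n h x :=
  funext fun _ => congrFun (Tuple.comp_perm_comp_sort_eq_comp_sort (f := x) (σ := σ)) _

lemma maxN_of_strictAnti (h : N ≤ n) {x : Fin n → ℝ} (hx : StrictAnti x) :
    maxN N n h x = x ∘ Fin.castLE h := by
  have hsort : x ∘ Tuple.sort x = x ∘ Fin.revPerm :=
    Tuple.unique_monotone (Tuple.monotone_sort x) (hx.comp Fin.rev_strictAnti).monotone
  funext i
  have hi := congrFun hsort ⟨n - 1 - i, by omega⟩
  simp only [Function.comp_apply, Fin.revPerm_apply] at hi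
  rw [maxN, hi, Function.comp_apply]
  exact congrArg x (Fin.ext (by rw [Fin.val_rev, Fin.val_castLE, Fin.val_mk]; omega))

end maxN

lemma existsUnique_strictAnti_comp_perm {α : Type*} [LinearOrder α] {m : ℕ} {x : Fin m → α}
    (hx : Function.Injective x) : ∃! σ : Equiv.Perm (Fin m), StrictAnti (x ∘ σ) := by
  have hanti : StrictAnti (x ∘ (Fin.revPerm.trans (Tuple.sort x))) :=
    ((Tuple.monotone_sort x).strictMono_of_injective
      (hx.comp (Tuple.sort x).injective)).comp_strictAnti Fin.rev_strictAnti
  refine ⟨_, hanti, fun τ hτ => Equiv.ext fun i => hx ?_⟩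
  exact congrFun (Tuple.unique_antitone hτ.antitone hanti.antitone) i

lemma measurableSet_setOf_strictAnti {m : ℕ} :
    MeasurableSet {x : Fin m → ℝ | StrictAnti x} := by
  have hset : {x : Fin m → ℝ | StrictAnti x} =
      ⋂ (i : Fin m) (j : Fin m) (_ : i < j), {x | x j < x i} := by
    ext x
    simp [StrictAnti]
  rw [hset]
  exact .iInter fun i => .iInter fun j => .iInter fun _ =>
    measurableSet_lt (measurable_pi_apply j) (measurable_pi_apply i)

lemma strictAnti_append_iff {α : Type*} [Preorder α] {N m : ℕ} {t : Fin N → α}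
    {s : Fin m → α} :
    StrictAnti (Fin.append t s) ↔ StrictAnti t ∧ StrictAnti s ∧ ∀ i j, s j < t i := by
  constructor
  · intro h
    refine ⟨fun i j hij => ?_, fun i j hij => ?_, fun i j => ?_⟩
    · simpa using h (Fin.strictMono_castAdd m hij)
    · simpa using h (Fin.strictMono_natAdd N hij)
    · simpa using h (show Fin.castAdd m i < Fin.natAdd N j by simp [Fin.lt_def]; omega)
  · rintro ⟨ht, hs, hst⟩ a b hab
    induction a using Fin.addCases <;> induction b using Fin.addCases <;>
      simp only [Fin.lt_def, Fin.val_castAdd, Fin.val_natAdd, Fin.append_left,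
        Fin.append_right] at hab ⊢
    · exact ht (Fin.lt_def.2 hab)
    · exact hst _ _
    · omega
    · exact hs (Fin.lt_def.2 (by omega))

section pi

variable {ι α : Type*} [Fintype ι] [MeasurableSpace α] {μ : Measure α} [SigmaFinite μ]

lemma measurePreserving_comp_perm (σ : Equiv.Perm ι) :
    MeasurePreserving (fun x : ι → α => x ∘ σ) (Measure.pi fun _ => μ)
      (Measure.pi fun _ => μ) := by
  convert measurePreserving_piCongrLeft (fun _ : ι => μ) σ.symm using 1
  ext x i
  simp [MeasurableEquiv.piCongrLeft, Equiv.piCongrLeft, Equiv.piCongrLeft']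

lemma measurePreserving_append {N m : ℕ} :
    MeasurePreserving (fun p : (Fin N → α) × (Fin m → α) => Fin.append p.1 p.2)
      ((Measure.pi fun _ => μ).prod (Measure.pi fun _ => μ)) (Measure.pi fun _ => μ) := by
  convert (measurePreserving_piCongrLeft (fun _ : Fin (N + m) => μ) finSumFinEquiv).comp
    (measurePreserving_sumPiEquivProdPi_symm fun _ : Fin N ⊕ Fin m => μ) using 1
  ext p i
  obtain ⟨j | j, rfl⟩ := finSumFinEquiv.surjective i <;>
    rw [Function.comp_apply, MeasurableEquiv.coe_piCongrLeft, Equiv.piCongrLeft_apply_apply] <;>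
    simp [MeasurableEquiv.coe_sumPiEquivProdPi_symm]

lemma pi_setOf_apply_eq_apply_eq_zero [MeasurableEq α] [NullSingletonClass μ] {i j : ι}
    (hij : i ≠ j) :
    Measure.pi (fun _ => μ) {x : ι → α | x i = x j} = 0 := by
  classical
  let e := MeasurableEquiv.piEquivPiSubtypeProd (fun _ : ι => α) (· = i)
  let S : Set (({k // k = i} → α) × ({k // ¬k = i} → α)) :=
    {p | p.1 ⟨i, rfl⟩ = p.2 ⟨j, hij.symm⟩}
  have hS : MeasurableSet S := measurableSet_eq_fun (by fun_prop) (by fun_prop)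
  have hpre : {x : ι → α | x i = x j} = e ⁻¹' S := rfl
  rw [hpre, (measurePreserving_piEquivPiSubtypeProd _ _).measure_preimage hS.nullMeasurableSet,
    Measure.prod_apply hS]
  simp only [S, Set.preimage_ofPred_eq, eq_comm (a := (_ : ({k // k = i} → α)) ⟨i, rfl⟩),
    Measure.pi_hyperplane, lintegral_zero]

lemma ae_injective_pi [MeasurableEq α] [NullSingletonClass μ] :
    ∀ᵐ x ∂Measure.pi fun _ : ι => μ, Function.Injective x := by
  have hne : ∀ᵐ x ∂Measure.pi fun _ : ι => μ, ∀ i j, i ≠ j → x i ≠ x j := by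
    simp only [ae_all_iff]
    intro i j
    by_cases hij : i = j
    · simp [hij]
    · simpa [hij, ae_iff] using pi_setOf_apply_eq_apply_eq_zero (μ := μ) hij
  filter_upwards [hne] with x hx i j
  exact not_imp_not.mp (hx i j)

end pi

section symmetrization

variable {μ : Measure ℝ} [SigmaFinite μ] [NullSingletonClass μ]

lemma lintegral_eq_factorial_mul_setLIntegral_strictAnti {m : ℕ}
    {f : (Fin m → ℝ) → ℝ≥0∞} (hf : Measurable f)
    (hsymm : ∀ (σ : Equiv.Perm (Fin m)) x, f (x ∘ σ) = f x) :
    ∫⁻ x, f x ∂Measure.pi (fun _ => μ) =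
      m ! * ∫⁻ x in {x | StrictAnti x}, f x ∂Measure.pi (fun _ => μ) := by
  classical
  have hchamber (σ : Equiv.Perm (Fin m)) :
      MeasurableSet {x : Fin m → ℝ | StrictAnti (x ∘ σ)} :=
    measurableSet_setOf_strictAnti.preimage (measurePreserving_comp_perm (μ := μ) σ).measurable
  have hcover : ∀ᵐ x ∂Measure.pi (fun _ => μ),
      f x = ∑ σ : Equiv.Perm (Fin m), {x | StrictAnti (x ∘ σ)}.indicator f x := by
    filter_upwards [ae_injective_pi] with x hx
    obtain ⟨σ, hσ, huniq⟩ := existsUnique_strictAnti_comp_perm hx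
    rw [Finset.sum_eq_single σ
      (fun τ _ hτ => Set.indicator_of_notMem (fun h => hτ (huniq τ h)) _) (by simp),
      Set.indicator_of_mem hσ]
  have hintegral (σ : Equiv.Perm (Fin m)) :
      ∫⁻ x, {x | StrictAnti (x ∘ σ)}.indicator f x ∂Measure.pi (fun _ => μ) =
        ∫⁻ x in {x | StrictAnti x}, f x ∂Measure.pi (fun _ => μ) := by
    rw [← lintegral_indicator measurableSet_setOf_strictAnti,
      ← (measurePreserving_comp_perm σ).lintegral_comp
        (hf.indicator measurableSet_setOf_strictAnti)]
    congr with x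
    simp [Set.indicator_apply, hsymm]
  rw [lintegral_congr_ae hcover, lintegral_finsetSum _ fun σ _ => hf.indicator (hchamber σ)]
  simp [hintegral, Fintype.card_perm]

lemma pi_setOf_strictAnti_forall_mem {m : ℕ} {A : Set ℝ} (hA : MeasurableSet A) :
    Measure.pi (fun _ : Fin m => μ) {x | StrictAnti x ∧ ∀ i, x i ∈ A} = μ A ^ m / m ! := by
  have hbox : MeasurableSet (Set.univ.pi fun _ : Fin m => A) := .univ_pi fun _ => hA
  have hsymm (σ : Equiv.Perm (Fin m)) (x : Fin m → ℝ) :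
      (Set.univ.pi fun _ => A).indicator (1 : (Fin m → ℝ) → ℝ≥0∞) (x ∘ σ) =
        (Set.univ.pi fun _ => A).indicator 1 x := by
    have hmem : x ∘ σ ∈ Set.univ.pi (fun _ => A) ↔ x ∈ Set.univ.pi (fun _ => A) := by
      simpa [Set.mem_univ_pi] using σ.forall_congr_right (q := fun i => x i ∈ A)
    by_cases hx : x ∈ Set.univ.pi (fun _ => A)
    · rw [Set.indicator_of_mem hx, Set.indicator_of_mem (hmem.2 hx), Pi.one_apply, Pi.one_apply]
    · rw [Set.indicator_of_notMem hx, Set.indicator_of_notMem (mt hmem.1 hx)]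
  have key := lintegral_eq_factorial_mul_setLIntegral_strictAnti (μ := μ)
    (f := (Set.univ.pi fun _ => A).indicator 1) (measurable_const.indicator hbox) hsymm
  rw [lintegral_indicator_one hbox, Measure.pi_pi, lintegral_indicator_one hbox,
    Measure.restrict_apply hbox, Finset.prod_const, Finset.card_univ, Fintype.card_fin] at key
  rw [ENNReal.eq_div_iff (by positivity) (ENNReal.natCast_ne_top _), key, Set.inter_comm]
  congr 2
  ext x
  simp

lemma setLIntegral_strictAnti_comp_castAdd {N m : ℕ} {g : (Fin N → ℝ) → ℝ≥0∞}
    (hg : Measurable g) :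
    ∫⁻ x in {x | StrictAnti x}, g (x ∘ Fin.castAdd m) ∂Measure.pi (fun _ => μ) =
      ∫⁻ t in {t | StrictAnti t}, g t * (μ (⋂ i, Set.Iio (t i)) ^ m / m !)
        ∂Measure.pi (fun _ => μ) := by
  have happend := measurePreserving_append (N := N) (m := m) (μ := μ)
  have hA := measurableSet_setOf_strictAnti.preimage happend.measurable
  have hfirst : Measurable fun x : Fin (N + m) → ℝ => g (x ∘ Fin.castAdd m) :=
    hg.comp (by fun_prop)
  rw [← happend.setLIntegral_comp_preimage measurableSet_setOf_strictAnti hfirst,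
    ← lintegral_indicator hA, lintegral_prod _
      (by exact ((hfirst.comp happend.measurable).indicator hA).aemeasurable),
    ← lintegral_indicator measurableSet_setOf_strictAnti]
  refine lintegral_congr fun t => ?_
  have hF : (fun p : (Fin N → ℝ) × (Fin m → ℝ) => g (Fin.append p.1 p.2 ∘ Fin.castAdd m))
      ∘ Prod.mk t = fun _ => g t :=
    funext fun y => congrArg g (funext (Fin.append_left t y))
  simp_rw [← Set.indicator_comp_right (Prod.mk t)]
  rw [hF, lintegral_indicator_const (hA.preimage measurable_prodMk_left)]
  by_cases ht : StrictAnti t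
  · have hslice : Prod.mk t ⁻¹' ((fun p => Fin.append p.1 p.2) ⁻¹' {x | StrictAnti x}) =
        {y : Fin m → ℝ | StrictAnti y ∧ ∀ j, y j ∈ ⋂ i, Set.Iio (t i)} := by
      ext y
      simp [strictAnti_append_iff, ht, forall_comm (α := Fin N)]
    rw [hslice, pi_setOf_strictAnti_forall_mem (.iInter fun _ => measurableSet_Iio),
      Set.indicator_of_mem ht]
  · simp [strictAnti_append_iff, ht]

lemma lintegral_comp_maxN {N m : ℕ} (h : N ≤ N + m) {g : (Fin N → ℝ) → ℝ≥0∞}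
    (hg : Measurable g) :
    ∫⁻ x, g (maxN N (N + m) h x) ∂Measure.pi (fun _ => μ) =
      ∫⁻ t in {t | StrictAnti t}, g t * ((N + m)! / m ! * μ (⋂ i, Set.Iio (t i)) ^ m)
        ∂Measure.pi (fun _ => μ) := by
  rw [lintegral_eq_factorial_mul_setLIntegral_strictAnti (f := fun x => g (maxN N (N + m) h x))
      (hg.comp (measurable_maxN h)) fun σ x => congrArg g (maxN_comp_perm h x σ),
    setLIntegral_congr_fun (g := fun x => g (x ∘ Fin.castAdd m)) measurableSet_setOf_strictAnti
      fun x hx => congrArg g (maxN_of_strictAnti h hx),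
    setLIntegral_strictAnti_comp_castAdd hg, ← lintegral_const_mul' _ _ (by simp)]
  congr with t
  rw [ENNReal.div_eq_inv_mul, ENNReal.div_eq_inv_mul]
  ring

/-- `⋂ i, Set.Iio (t i)` is `(-∞, t_N)` for decreasing `t`, written so as to make sense for
`N = 0` too. -/
lemma map_maxN_pi_eq_withDensity_strictAnti {N m : ℕ} (h : N ≤ N + m) :
    (Measure.pi fun _ => μ).map (maxN N (N + m) h) =
      (Measure.pi fun _ => μ).withDensity ({t | StrictAnti t}.indicator
        fun t => (N + m)! / m ! * μ (⋂ i, Set.Iio (t i)) ^ m) := by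
  ext B hB
  rw [Measure.map_apply (measurable_maxN h) hB, withDensity_apply _ hB,
    ← lintegral_indicator_one (measurable_maxN h hB),
    setLIntegral_indicator measurableSet_setOf_strictAnti]
  convert lintegral_comp_maxN (μ := μ) h (measurable_one.indicator hB) using 1
  · rfl
  · rw [Set.inter_comm, ← setLIntegral_indicator hB]
    congr with t
    by_cases ht : t ∈ B <;> simp [ht]

end symmetrization

lemma iInter_Iio_eq_Iio_last_of_antitone {α : Type*} [Preorder α] {N : ℕ}
    {t : Fin (N + 1) → α} (ht : Antitone t) :
    ⋂ i, Set.Iio (t i) = Set.Iio (t (Fin.last N)) :=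
  Set.Subset.antisymm (Set.iInter_subset _ _)
    (Set.subset_iInter fun i => Set.Iio_subset_Iio (ht (Fin.le_last i)))

lemma ofReal_cdf' (μ : Measure ℝ) [IsFiniteMeasure μ] (x : ℝ) :
    ENNReal.ofReal (cdf' μ x) = μ (Set.Iic x) :=
  ENNReal.ofReal_toReal (measure_ne_top μ _)

/-- **Density of the order statistics.**
If `μ` is an atomless probability measure on `ℝ` with distribution function `F` and
`1 ≤ N ≤ n`, the pushforward of `μ^⊗n` by `maxN` is absolutely continuous with respect to
`μ^⊗N`, with density `(t_1,…,t_N) ↦ (n!/(n-N)!) 1_{t_1 ≥ ⋯ ≥ t_N} F(t_N)^{n-N}`. -/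
theorem map_maxN_pi_eq_withDensity (μ : Measure ℝ) [IsProbabilityMeasure μ] [NullSingletonClass μ]
    (N n : ℕ) (hN : 1 ≤ N) (h : N ≤ n) :
    (Measure.pi fun _ : Fin n => μ).map (maxN N n h) =
      (Measure.pi fun _ : Fin N => μ).withDensity fun t =>
        ENNReal.ofReal
          (if Antitone t then
            ((n.factorial : ℝ) / ((n - N).factorial : ℝ)) *
              cdf' μ (t ⟨N - 1, by omega⟩) ^ (n - N)
          else 0) := by
  obtain ⟨m, rfl⟩ := Nat.exists_eq_add_of_le h
  obtain ⟨k, rfl⟩ := Nat.exists_eq_add_of_le' hN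
  rw [map_maxN_pi_eq_withDensity_strictAnti, Nat.add_sub_cancel_left]
  refine withDensity_congr_ae ?_
  filter_upwards [ae_injective_pi] with t ht
  by_cases hanti : StrictAnti t
  · have hlast : (⟨k + 1 - 1, by omega⟩ : Fin (k + 1)) = Fin.last k := Fin.ext (by simp)
    rw [Set.indicator_of_mem hanti, if_pos hanti.antitone, hlast,
      iInter_Iio_eq_Iio_last_of_antitone hanti.antitone, measure_congr Iio_ae_eq_Iic,
      ENNReal.ofReal_mul (by positivity), ENNReal.ofReal_div_of_pos (by positivity),
      ENNReal.ofReal_pow (p := cdf' μ _) ENNReal.toReal_nonneg, ofReal_cdf',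
      ENNReal.ofReal_natCast, ENNReal.ofReal_natCast]
  · rw [Set.indicator_of_notMem hanti,
      if_neg fun hmono => hanti (hmono.strictAnti_of_injective ht), ENNReal.ofReal_zero]
end

section
/- For every integer N ≥ 1 the following two inequalities hold: (a) for every real x with 0 ≤ x < 1, ∫_0^x (N^N/(N−1)!) · u^{N−1} e^{−Nu} du ≤ x^N e^{N(1−x)}; (b) for every real x > 1, ∫_x^{+∞} (N^N/(N−1)!) · u^{N−1} e^{−Nu} du ≤ x^N e^{N(1−x)}. -/
/-!
Exponential tilting (Chernoff's method). On the side of `x` where `(c - N) (u - x) ≤ 0` one has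
`e^{-N u} ≤ e^{(c - N) x} e^{-c u}`; integrating the right-hand side over all of `(0, ∞)` gives
`e^{(c - N) x} (N - 1)! / c^N`, and the choice `c = N / x` turns this into `x^N e^{N (1 - x)}`.
-/

open MeasureTheory Set Real
open scoped Nat

lemma integrableOn_pow_mul_exp_neg_mul_Ioi (n : ℕ) {c : ℝ} (hc : 0 < c) :
    IntegrableOn (fun u : ℝ ↦ u ^ n * exp (-(c * u))) (Ioi 0) := by
  have hn : (-1 : ℝ) < n := by linarith [n.cast_nonneg (α := ℝ)]
  refine (integrableOn_rpow_mul_exp_neg_mul_rpow hn one_pos hc).congr_fun (fun u _ ↦ ?_)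
    measurableSet_Ioi
  simp only [rpow_natCast, rpow_one, neg_mul]

lemma integral_pow_mul_exp_neg_mul_Ioi (n : ℕ) {c : ℝ} (hc : 0 < c) :
    ∫ u in Ioi (0 : ℝ), u ^ n * exp (-(c * u)) = n ! / c ^ (n + 1) := by
  have h := integral_rpow_mul_exp_neg_mul_Ioi (a := n + 1) (by positivity) hc
  rw [add_sub_cancel_right, Gamma_nat_eq_factorial, one_div, inv_rpow hc.le,
    ← Nat.cast_succ, rpow_natCast] at h
  simpa only [rpow_natCast, inv_mul_eq_div] using h

lemma setIntegral_pow_mul_exp_neg_mul_le {n : ℕ} {r c x : ℝ} (hc : 0 < c) {S : Set ℝ}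
    (hS : MeasurableSet S) (hS0 : S ⊆ Ioi 0) (htilt : ∀ u ∈ S, (c - r) * (u - x) ≤ 0) :
    ∫ u in S, u ^ n * exp (-(r * u)) ≤ exp ((c - r) * x) * (n ! / c ^ (n + 1)) := by
  set g := fun u : ℝ ↦ exp ((c - r) * x) * (u ^ n * exp (-(c * u)))
  have hg : IntegrableOn g (Ioi 0) := (integrableOn_pow_mul_exp_neg_mul_Ioi n hc).const_mul _
  have hle : ∀ u ∈ S, u ^ n * exp (-(r * u)) ≤ g u := by
    intro u hu
    have hexp : exp (-(r * u)) ≤ exp ((c - r) * x) * exp (-(c * u)) := by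
      rw [← exp_add, exp_le_exp]
      linarith [htilt u hu]
    calc u ^ n * exp (-(r * u)) ≤ u ^ n * (exp ((c - r) * x) * exp (-(c * u))) :=
          mul_le_mul_of_nonneg_left hexp (pow_nonneg (hS0 hu).le n)
      _ = g u := by ring
  have hf : IntegrableOn (fun u ↦ u ^ n * exp (-(r * u))) S :=
    (hg.mono_set hS0).mono' (by fun_prop) <| ae_restrict_of_forall_mem hS fun u hu ↦ by
      rw [norm_of_nonneg (by have : 0 < u := hS0 hu; positivity)]
      exact hle u hu
  have hg_nonneg : ∀ u ∈ Ioi (0 : ℝ), 0 ≤ g u := fun u (hu : 0 < u) ↦ by positivity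
  calc ∫ u in S, u ^ n * exp (-(r * u))
      ≤ ∫ u in S, g u := setIntegral_mono_on hf (hg.mono_set hS0) hS hle
    _ ≤ ∫ u in Ioi 0, g u :=
      setIntegral_mono_set hg (ae_restrict_of_forall_mem measurableSet_Ioi hg_nonneg)
        (.of_forall hS0)
    _ = _ := by rw [integral_const_mul, integral_pow_mul_exp_neg_mul_Ioi n hc]

lemma setIntegral_gamma_density_le {N : ℕ} (hN : 1 ≤ N) {x : ℝ} (hx : 0 < x) {S : Set ℝ}
    (hS : MeasurableSet S) (hS0 : S ⊆ Ioi 0) (hside : ∀ u ∈ S, (1 - x) * (u - x) ≤ 0) :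
    ∫ u in S, (N : ℝ) ^ N / ((N - 1).factorial : ℝ) * u ^ (N - 1) * exp (-(N : ℝ) * u) ≤
      x ^ N * exp ((N : ℝ) * (1 - x)) := by
  obtain ⟨n, rfl⟩ : ∃ n, N = n + 1 := ⟨N - 1, by omega⟩
  rw [Nat.add_sub_cancel]
  set M : ℝ := ((n + 1 : ℕ) : ℝ)
  have hM : 0 < M := by positivity
  have htilt : ∀ u ∈ S, (M / x - M) * (u - x) ≤ 0 := fun u hu ↦ by
    rw [show M / x - M = M / x * (1 - x) by field_simp, mul_assoc]
    exact mul_nonpos_of_nonneg_of_nonpos (by positivity) (hside u hu)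
  calc ∫ u in S, M ^ (n + 1) / n ! * u ^ n * exp (-M * u)
      = M ^ (n + 1) / n ! * ∫ u in S, u ^ n * exp (-(M * u)) := by
        rw [← integral_const_mul]
        simp only [neg_mul, mul_assoc]
    _ ≤ M ^ (n + 1) / n ! * (exp ((M / x - M) * x) * (n ! / (M / x) ^ (n + 1))) :=
        mul_le_mul_of_nonneg_left
          (setIntegral_pow_mul_exp_neg_mul_le (by positivity) hS hS0 htilt) (by positivity)
    _ = x ^ (n + 1) * exp (M * (1 - x)) := by
        rw [show (M / x - M) * x = M * (1 - x) by field_simp, div_pow]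
        field_simp

/-- **Chernoff-type tail bounds for the Gamma(N, N) distribution.**
For every integer `N ≥ 1`:
(a) for `0 ≤ x < 1`, `∫_0^x (N^N/(N-1)!) u^{N-1} e^{-Nu} du ≤ x^N e^{N(1-x)}`;
(b) for `x > 1`, `∫_x^∞ (N^N/(N-1)!) u^{N-1} e^{-Nu} du ≤ x^N e^{N(1-x)}`. -/
theorem gamma_tail_bounds (N : ℕ) (hN : 1 ≤ N) :
    (∀ x : ℝ, 0 ≤ x → x < 1 →
      (∫ u in (0 : ℝ)..x,
          (N : ℝ) ^ N / ((N - 1).factorial : ℝ) * u ^ (N - 1) * Real.exp (-(N : ℝ) * u)) ≤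
        x ^ N * Real.exp ((N : ℝ) * (1 - x))) ∧
    (∀ x : ℝ, 1 < x →
      (∫ u in Set.Ioi x,
          (N : ℝ) ^ N / ((N - 1).factorial : ℝ) * u ^ (N - 1) * Real.exp (-(N : ℝ) * u)) ≤
        x ^ N * Real.exp ((N : ℝ) * (1 - x))) := by
  refine ⟨fun x hx0 hx1 ↦ ?_, fun x hx1 ↦ ?_⟩
  · rcases hx0.eq_or_lt with rfl | hx0
    · simp [zero_pow (by omega : N ≠ 0)]
    rw [intervalIntegral.integral_of_le hx0.le]
    exact setIntegral_gamma_density_le hN hx0 measurableSet_Ioc Ioc_subset_Ioi_self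
      fun u hu ↦ mul_nonpos_of_nonneg_of_nonpos (by linarith) (by linarith [hu.2])
  · exact setIntegral_gamma_density_le hN (by linarith) measurableSet_Ioi
      (Ioi_subset_Ioi (by linarith))
      fun u (hu : x < u) ↦ mul_nonpos_of_nonpos_of_nonneg (by linarith) (by linarith)
end

section
/- Let (a_k)_{k≥1} be a sequence of real numbers with 0 ≤ a_k ≤ 1 for all k, and let L be a real number with 0 < L ≤ 1. If a_k^k → L as k → ∞, then k·(a_k − 1) → log L as k → ∞; consequently max(0, 1 + k(a_k − 1)) → max(0, 1 + log L). In particular, if cumulative distribution functions F_k satisfy F_k(x)^k → F(x) with F(x) > 0 at some point x, then the k-fold free upper extremal convolution power F_k(x)^{⊞k} = max(0, 1 + k(F_k(x) − 1)) converges to max(0, 1 + log F(x)) = Λ^∨(F(x)). -/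
/-!
Taking logarithms, `a_k ^ k → L > 0` says `k log a_k → log L`, which forces `log a_k → 0`, i.e.
`a_k → 1`. The elementary bounds `log x ≤ x - 1 ≤ x log x` then squeeze `k (a_k - 1)` between
`k log a_k` and `a_k · k log a_k`, both tending to `log L`.
-/

open Filter Topology Real

theorem Real.sub_one_le_mul_log {x : ℝ} (hx : 0 < x) : x - 1 ≤ x * log x := by
  have h := mul_le_mul_of_nonneg_left (one_sub_inv_le_log_of_pos hx) hx.le
  rwa [mul_sub, mul_one, mul_inv_cancel₀ hx.ne'] at h

section MulLog

variable {α : Type*} {l : Filter α} {t b : α → ℝ} {c : ℝ}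

theorem tendsto_one_of_tendsto_mul_log (ht : Tendsto t l atTop) (hb : ∀ᶠ x in l, 0 < b x)
    (h : Tendsto (fun x => t x * log (b x)) l (𝓝 c)) : Tendsto b l (𝓝 1) := by
  have hlog : Tendsto (fun x => log (b x)) l (𝓝 0) := by
    refine (h.div_atTop ht).congr' ?_
    filter_upwards [ht.eventually_gt_atTop 0] with x hx
    exact mul_div_cancel_left₀ _ hx.ne'
  refine (tendsto_exp_nhds_zero_nhds_one.comp hlog).congr' ?_
  filter_upwards [hb] with x hx
  exact exp_log hx

theorem tendsto_mul_sub_one_of_tendsto_mul_log (ht : Tendsto t l atTop)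
    (hb : ∀ᶠ x in l, 0 < b x) (h : Tendsto (fun x => t x * log (b x)) l (𝓝 c)) :
    Tendsto (fun x => t x * (b x - 1)) l (𝓝 c) := by
  have hupper : Tendsto (fun x => b x * (t x * log (b x))) l (𝓝 c) := by
    simpa using (tendsto_one_of_tendsto_mul_log ht hb h).mul h
  refine tendsto_of_tendsto_of_tendsto_of_le_of_le' h hupper ?_ ?_
  all_goals filter_upwards [hb, ht.eventually_ge_atTop 0] with x hbx htx
  · exact mul_le_mul_of_nonneg_left (log_le_sub_one_of_pos hbx) htx
  · calc t x * (b x - 1) ≤ t x * (b x * log (b x)) :=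
          mul_le_mul_of_nonneg_left (sub_one_le_mul_log hbx) htx
      _ = b x * (t x * log (b x)) := by ring

end MulLog

theorem eventually_pos_of_tendsto_pow {a : ℕ → ℝ} {L : ℝ} (ha : ∀ k, 0 ≤ a k) (hL : 0 < L)
    (h : Tendsto (fun k => a k ^ k) atTop (𝓝 L)) : ∀ᶠ k in atTop, 0 < a k := by
  filter_upwards [h.eventually (eventually_gt_nhds hL), eventually_ne_atTop 0] with k hk hk0
  refine (ha k).lt_of_ne fun hak => ?_
  rw [← hak, zero_pow hk0] at hk
  exact hk.false

theorem free_max_conv_power_tendsto_general (a : ℕ → ℝ) (ha : ∀ k, 0 ≤ a k ∧ a k ≤ 1)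
    (L : ℝ) (hL : 0 < L)
    (h : Filter.Tendsto (fun k : ℕ => a k ^ k) Filter.atTop (nhds L)) :
    Filter.Tendsto (fun k : ℕ => (k : ℝ) * (a k - 1)) Filter.atTop (nhds (Real.log L)) ∧
    Filter.Tendsto (fun k : ℕ => max 0 (1 + (k : ℝ) * (a k - 1))) Filter.atTop
      (nhds (max 0 (1 + Real.log L))) := by
  have hpos := eventually_pos_of_tendsto_pow (fun k => (ha k).1) hL h
  have hlog : Tendsto (fun k : ℕ => (k : ℝ) * log (a k)) atTop (𝓝 (log L)) := by
    simpa only [Function.comp_def, log_pow] using (continuousAt_log hL.ne').tendsto.comp h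
  have hmain := tendsto_mul_sub_one_of_tendsto_mul_log tendsto_natCast_atTop_atTop hpos hlog
  exact ⟨hmain, tendsto_const_nhds.max (tendsto_const_nhds.add hmain)⟩

/-- **Convergence of free extremal convolution powers.**
Let `(a_k) ⊆ [0,1]` and `0 < L ≤ 1` with `a_k^k → L`.  Then `k (a_k - 1) → log L`, and
consequently the `k`-fold free upper extremal convolution powers
`max 0 (1 + k(a_k - 1))` converge to `max 0 (1 + log L) = Λ^∨(L)`.
(Applied to `a_k = F_k(x)` where `F_k(x)^k → F(x) > 0`, this gives
`F_k(x)^{⊞k} → Λ^∨(F(x))`.) -/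
theorem free_max_conv_power_tendsto (a : ℕ → ℝ) (ha : ∀ k, 0 ≤ a k ∧ a k ≤ 1)
    (L : ℝ) (hL : 0 < L) (hL1 : L ≤ 1)
    (h : Filter.Tendsto (fun k : ℕ => a k ^ k) Filter.atTop (nhds L)) :
    Filter.Tendsto (fun k : ℕ => (k : ℝ) * (a k - 1)) Filter.atTop (nhds (Real.log L)) ∧
    Filter.Tendsto (fun k : ℕ => max 0 (1 + (k : ℝ) * (a k - 1))) Filter.atTop
      (nhds (max 0 (1 + Real.log L))) :=
  free_max_conv_power_tendsto_general a ha L hL h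
end
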